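/- arXiv:1009.3780 — 6 statements merged into one kernel-verified Lean document; each statement's English description precedes it below -/
import Mathlib

section
/- Let H be a real Hilbert space, D ⊆ H a nonempty, closed and convex subset, h : H → H an operator, and λ ≥ 0. Assume that for every fixed point q of the operator P_D ∘ (I − λh) and every x ∈ H one has ⟨h(x), P_D(x − λh(x)) − q⟩ ≥ 0. Then for every x ∈ H and every fixed point q of P_D ∘ (I − λh), ⟨P_D(x − λh(x)) − x, P_D(x − λh(x)) − q⟩ ≤ 0 (i.e., P_D ∘ (I − λh) is a cutter/directed operator). -/
open RealInnerProductSpace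

/-- Lemma `lemma:Mod-proj`(ii): under condition (2.24), the operator
`P_D ∘ (I - λ h)` is a cutter (directed operator). -/
theorem projection_comp_ism_cutter
    {H : Type*} [NormedAddCommGroup H] [InnerProductSpace ℝ H] [CompleteSpace H]
    (D : Set H) (hDne : D.Nonempty) (hDcl : IsClosed D) (hDco : Convex ℝ D)
    (P : H → H) (hP : ∀ x : H, P x ∈ D ∧ ∀ y ∈ D, ‖x - P x‖ ≤ ‖x - y‖)
    (h : H → H) (lam : ℝ) (hlam0 : 0 ≤ lam)
    (hcond : ∀ q : H, P (q - lam • h q) = q →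
      ∀ x : H, 0 ≤ ⟪h x, P (x - lam • h x) - q⟫) :
    ∀ x q : H, P (q - lam • h q) = q →
      ⟪P (x - lam • h x) - x, P (x - lam • h x) - q⟫ ≤ 0 := by
  intro x q hq
  set y := x - lam • h x with hy
  set p := P y with hp
  have hpD : p ∈ D := (hP y).1
  have hqD : q ∈ D := hq ▸ (hP (q - lam • h q)).1
  -- variational characterization
  have hchar : ∀ w ∈ D, ⟪y - p, w - p⟫ ≤ 0 := by
    have hinf : ‖y - p‖ = ⨅ w : D, ‖y - w‖ := by
      haveI : Nonempty D := ⟨⟨p, hpD⟩⟩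
      apply le_antisymm
      · exact le_ciInf fun w => (hP y).2 w w.2
      · exact ciInf_le ⟨0, fun _ ⟨_, hh⟩ => hh ▸ norm_nonneg _⟩ (⟨p, hpD⟩ : D)
    exact (norm_eq_iInf_iff_real_inner_le_zero hDco hpD).mp hinf
  have h1 : ⟪y - p, q - p⟫ ≤ 0 := hchar q hqD
  have h2 : 0 ≤ ⟪h x, p - q⟫ := hcond q hq x
  have key : ⟪p - x, p - q⟫ = ⟪y - p, q - p⟫ - lam * ⟪h x, p - q⟫ := by
    have : p - x = -(y - p) - lam • h x := by
      rw [hy]; abel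
    rw [this, inner_sub_left, inner_neg_left, inner_smul_left,
      ← inner_neg_right, neg_sub]
    simp [starRingEnd_apply]
  calc ⟪p - x, p - q⟫ = ⟪y - p, q - p⟫ - lam * ⟪h x, p - q⟫ := key
    _ ≤ 0 := by nlinarith [mul_nonneg hlam0 h2]
end

section
/- Let H be a real Hilbert space, D ⊆ H a nonempty, closed and convex subset, h : H → H an operator, and λ ≥ 0. Assume that for every fixed point q of the operator P_D ∘ (I − λh) and every x ∈ H one has ⟨h(x), P_D(x − λh(x)) − q⟩ ≥ 0. Then for every x ∈ H and every fixed point q of P_D ∘ (I − λh), ‖P_D(x − λh(x)) − q‖² ≤ ‖x − q‖² − ‖P_D(x − λh(x)) − x‖² (i.e., P_D ∘ (I − λh) is firmly quasi-nonexpansive). -/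
open RealInnerProductSpace

/-- Lemma `lemma:Mod-proj`(iii): under condition (2.24), the operator
`P_D ∘ (I - λ h)` is firmly quasi-nonexpansive. -/
theorem projection_comp_ism_fqne
    {H : Type*} [NormedAddCommGroup H] [InnerProductSpace ℝ H] [CompleteSpace H]
    (D : Set H) (hDne : D.Nonempty) (hDcl : IsClosed D) (hDco : Convex ℝ D)
    (P : H → H) (hP : ∀ x : H, P x ∈ D ∧ ∀ y ∈ D, ‖x - P x‖ ≤ ‖x - y‖)
    (h : H → H) (lam : ℝ) (hlam0 : 0 ≤ lam)
    (hcond : ∀ q : H, P (q - lam • h q) = q →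
      ∀ x : H, 0 ≤ ⟪h x, P (x - lam • h x) - q⟫) :
    ∀ x q : H, P (q - lam • h q) = q →
      ‖P (x - lam • h x) - q‖ ^ 2 ≤ ‖x - q‖ ^ 2 - ‖P (x - lam • h x) - x‖ ^ 2 := by
  have key : ∀ z w, w ∈ D → ⟪z - P z, w - P z⟫ ≤ 0 := by
    intro z w hw
    have h1 : ‖z - P z‖ = ⨅ w : D, ‖z - w‖ := by
      haveI : Nonempty D := ⟨⟨P z, (hP z).1⟩⟩
      apply le_antisymm
      · exact le_ciInf fun ⟨y, hy⟩ => (hP z).2 y hy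
      · have hbdd : BddBelow (Set.range fun w : D => ‖z - w‖) := by
          refine ⟨0, ?_⟩; rintro r ⟨w, rfl⟩; exact norm_nonneg _
        exact ciInf_le hbdd ⟨P z, (hP z).1⟩
    exact (norm_eq_iInf_iff_real_inner_le_zero hDco (hP z).1).mp h1 w hw
  intro x q hq
  set z := x - lam • h x with hz
  set p := P z with hp
  have hqD : q ∈ D := hq ▸ (hP (q - lam • h q)).1
  have h2 : ⟪z - p, q - p⟫ ≤ 0 := key z q hqD
  have h3 : 0 ≤ ⟪h x, p - q⟫ := hcond q hq x
  have h4 : ⟪x - p, q - p⟫ ≤ 0 := by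
    have : x - p = (z - p) + lam • h x := by rw [hz]; abel
    rw [this, inner_add_left, real_inner_smul_left]
    have : ⟪h x, q - p⟫ ≤ 0 := by
      have : ⟪h x, q - p⟫ = -⟪h x, p - q⟫ := by
        rw [← inner_neg_right]; congr 1; abel
      linarith
    nlinarith
  have expand : ‖x - q‖ ^ 2 = ‖x - p‖ ^ 2 + 2 * ⟪x - p, p - q⟫ + ‖p - q‖ ^ 2 := by
    have := norm_add_sq_real (x - p) (p - q)
    have e : x - p + (p - q) = x - q := by abel
    rw [e] at this; linarith
  have h5 : ⟪x - p, p - q⟫ = -⟪x - p, q - p⟫ := by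
    rw [← inner_neg_right]; congr 1; abel
  have h6 : ‖p - x‖ = ‖x - p‖ := norm_sub_rev _ _
  rw [h6]; rw [h5] at expand; nlinarith
end

section
/- Let H be a real Hilbert space, let C and Ω be nonempty, closed and convex subsets of H, and let f : H → H be monotone on C and Lipschitz continuous on H with constant κ > 0. Assume Ω ∩ SOL(C,f) ≠ ∅. Let {λ_k} ⊆ [a,b] for some 0 < a ≤ b < 1/κ and {α_k} ⊆ [c,d] for some 0 < c ≤ d < 1. Let x⁰ ∈ H be arbitrary and define, for each k ≥ 0, y^k = P_C(x^k − λ_k f(x^k)), the half-space T_k = {w ∈ H : ⟨(x^k − λ_k f(x^k)) − y^k, w − y^k⟩ ≤ 0}, and x^{k+1} = α_k x^k + (1 − α_k) P_Ω(P_{T_k}(x^k − λ_k f(y^k))). Then the sequences {x^k} and {y^k} converge weakly to one and the same point z ∈ Ω ∩ SOL(C,f), and moreover z = lim_{k→∞} P_{Ω ∩ SOL(C,f)}(x^k) (strong limit of the projections). -/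
/-!
Fix `u ∈ Ω ∩ SOL` and write `t k = P_{T k}(x k - λ k f(y k))`. Since `u ∈ C ⊆ T k`, the
extragradient step gives `‖t k - u‖² ≤ ‖x k - u‖² - (1 - (λ k κ)²) ‖x k - y k‖²`; `P_Ω` does not
increase the distance to `u`, and averaging with weight `α k` gains
`α k (1 - α k) ‖x k - P_Ω (t k)‖²`. Hence `(x k)` is Fejér monotone with respect to `Ω ∩ SOL`,
and `x k - y k → 0`, `x k - P_Ω (t k) → 0`. A weak cluster point therefore lies in `Ω` and in
`C` (closed convex sets are weakly closed), and in `SOL` by Minty's description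
`SOL = {u ∈ C | ∀ w ∈ C, ⟪f w, w - u⟫ ≥ 0}`, whose defining inequalities pass to weak limits.
Opial's argument then gives weak convergence of the whole sequence. Finally, for `k ≤ m`,
`‖P x m - P x k‖² ≤ d(x k)² - d(x m)²`, with `P` the projection onto `Ω ∩ SOL` and `d` the
distance to it, so the projections form a Cauchy sequence, and the variational inequality of `P`
identifies their limit with the weak limit.
-/

open RealInnerProductSpace Filter Topology

section NearestPoint

variable {H : Type*} [NormedAddCommGroup H] [InnerProductSpace ℝ H]

def IsNearestPoint (S : Set H) (x p : H) : Prop :=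
  p ∈ S ∧ ∀ q ∈ S, ‖x - p‖ ≤ ‖x - q‖

theorem norm_smul_add_one_sub_smul_sq (θ : ℝ) (v w : H) :
    ‖θ • v + (1 - θ) • w‖ ^ 2 =
      θ * ‖v‖ ^ 2 + (1 - θ) * ‖w‖ ^ 2 - θ * (1 - θ) * ‖v - w‖ ^ 2 := by
  rw [norm_add_sq_real, norm_sub_sq_real, norm_smul, norm_smul, real_inner_smul_left,
    real_inner_smul_right, mul_pow, mul_pow, Real.norm_eq_abs, Real.norm_eq_abs, sq_abs, sq_abs]
  ring

theorem convex_setOf_inner_sub_nonpos (v y : H) : Convex ℝ {w : H | ⟪v, w - y⟫ ≤ 0} := by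
  simp_rw [inner_sub_right, sub_nonpos]
  exact convex_halfSpace_le (innerₛₗ ℝ v).isLinear _

theorem isClosed_setOf_inner_sub_nonpos (v y : H) : IsClosed {w : H | ⟪v, w - y⟫ ≤ 0} :=
  isClosed_le (continuous_const.inner (continuous_id.sub continuous_const)) continuous_const

namespace IsNearestPoint

variable {S : Set H} {x p u : H}

theorem inner_sub_nonpos (h : IsNearestPoint S x p) (hS : Convex ℝ S) (hu : u ∈ S) :
    ⟪x - p, u - p⟫ ≤ 0 := by
  have : Nonempty S := ⟨⟨p, h.1⟩⟩
  refine (norm_eq_iInf_iff_real_inner_le_zero hS h.1).1 (le_antisymm ?_ ?_) u hu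
  · exact le_ciInf fun q => h.2 q q.2
  · exact ciInf_le ⟨0, Set.forall_mem_range.2 fun _ => norm_nonneg _⟩ (⟨p, h.1⟩ : S)

theorem norm_sub_sq_le (h : IsNearestPoint S x p) (hS : Convex ℝ S) (hu : u ∈ S) :
    ‖p - u‖ ^ 2 ≤ ‖x - u‖ ^ 2 - ‖x - p‖ ^ 2 := by
  have hinner := h.inner_sub_nonpos hS hu
  have hsplit : x - u = (x - p) - (u - p) := by abel
  rw [hsplit, norm_sub_sq_real (x - p), ← norm_neg (u - p), neg_sub]
  linarith

end IsNearestPoint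

end NearestPoint

section WeakConvergence

variable {H : Type*} [NormedAddCommGroup H] [InnerProductSpace ℝ H] {ι : Type*}

def WeakTendsto (u : ι → H) (l : Filter ι) (z : H) : Prop :=
  ∀ w, Tendsto (fun k => ⟪u k, w⟫) l (𝓝 ⟪z, w⟫)

namespace WeakTendsto

variable {u v : ι → H} {l : Filter ι} {z : H}

theorem of_tendsto_sub (h : WeakTendsto u l z) (huv : Tendsto (fun k => u k - v k) l (𝓝 0)) :
    WeakTendsto v l z := fun w => by
  have hsub : Tendsto (fun k => ⟪u k - v k, w⟫) l (𝓝 0) := by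
    simpa using huv.inner (tendsto_const_nhds (x := w))
  simpa [inner_sub_left] using (h w).sub hsub

theorem tendsto_inner (h : WeakTendsto u l z) (hu : IsBoundedUnder (· ≤ ·) l fun k => ‖u k‖)
    {v₀ : H} (hv : Tendsto v l (𝓝 v₀)) : Tendsto (fun k => ⟪u k, v k⟫) l (𝓝 ⟪z, v₀⟫) := by
  have hsmall : Tendsto (fun k => ⟪u k, v k - v₀⟫) l (𝓝 0) :=
    (tendsto_sub_nhds_zero_iff.2 hv).op_zero_isBoundedUnder_le hu (fun a b => ⟪b, a⟫)
      fun a b => by rw [mul_comm]; exact norm_inner_le_norm b a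
  simpa [inner_sub_right] using hsmall.add (h v₀)

theorem mem_of_isClosed_of_convex [CompleteSpace H] [l.NeBot] (h : WeakTendsto u l z) {S : Set H}
    (hcl : IsClosed S) (hco : Convex ℝ S) (hu : ∀ᶠ k in l, u k ∈ S) : z ∈ S := by
  obtain ⟨k, hk⟩ := hu.exists
  obtain ⟨p, hpS, hp⟩ := exists_norm_eq_iInf_of_complete_convex ⟨u k, hk⟩ hcl.isComplete hco z
  have hvi := (norm_eq_iInf_iff_real_inner_le_zero hco hpS).1 hp
  have hle : ‖z - p‖ ^ 2 ≤ 0 := by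
    have hlim : Tendsto (fun k => ⟪u k, z - p⟫ - ⟪p, z - p⟫) l (𝓝 (‖z - p‖ ^ 2)) := by
      rw [← real_inner_self_eq_norm_sq, inner_sub_left]
      exact (h (z - p)).sub_const _
    refine le_of_tendsto hlim (hu.mono fun k hk => ?_)
    rw [← inner_sub_left, real_inner_comm]
    exact hvi _ hk
  rwa [norm_sub_eq_zero_iff.1 ((sq_nonpos_iff _).1 hle)]

end WeakTendsto

/-- Banach–Alaoglu through the Riesz isomorphism `H ≃ H⋆`; ultrafilters take the place of
subsequences. -/
theorem exists_weakTendsto_of_norm_le [CompleteSpace H] {u : ι → H} {R : ℝ}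
    (hu : ∀ k, ‖u k‖ ≤ R) (U : Ultrafilter ι) : ∃ z, WeakTendsto u U z := by
  set φ : ι → WeakDual ℝ H :=
    fun k => StrongDual.toWeakDual (InnerProductSpace.toDual ℝ H (u k))
  have hball : ∀ k, φ k ∈ WeakDual.toStrongDual ⁻¹' Metric.closedBall 0 R := fun k => by
    simpa [φ] using hu k
  obtain ⟨ψ, -, hψ⟩ := (WeakDual.isCompact_closedBall (𝕜 := ℝ) (0 : StrongDual ℝ H) R)
    |>.ultrafilter_le_nhds (U.map φ) (le_principal_iff.2 (mem_map.2 (Eventually.of_forall hball)))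
  refine ⟨(InnerProductSpace.toDual ℝ H).symm (WeakDual.toStrongDual ψ), fun w => ?_⟩
  have := ((WeakDual.eval_continuous w).tendsto ψ).comp (show Tendsto φ U (𝓝 ψ) from hψ)
  simpa [φ, Function.comp_def] using this

end WeakConvergence

theorem cauchySeq_of_dist_sq_le_sub {α : Type*} [PseudoMetricSpace α] {p : ℕ → α} {e : ℕ → ℝ}
    (he : BddBelow (Set.range e)) (h : ∀ k m, k ≤ m → dist (p k) (p m) ^ 2 ≤ e k - e m) :
    CauchySeq p := by
  have hanti : Antitone e := fun k m hkm => by nlinarith [h k m hkm, sq_nonneg (dist (p k) (p m))]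
  have hlim := tendsto_atTop_ciInf hanti he
  have hdist : ∀ N n, N ≤ n → dist (p N) (p n) ≤ √(e N - ⨅ i, e i) := fun N n hNn => by
    rw [Real.le_sqrt dist_nonneg (by linarith [ciInf_le he N])]
    linarith [h N n hNn, ciInf_le he n]
  refine cauchySeq_of_le_tendsto_0 (fun N => 2 * √(e N - ⨅ i, e i)) (fun n m N hn hm => ?_) ?_
  · linarith [dist_triangle_left (p n) (p m) (p N), hdist N n hn, hdist N m hm]
  · simpa using ((hlim.sub_const (⨅ i, e i)).sqrt).const_mul 2

section Fejer

variable {H : Type*} [NormedAddCommGroup H]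

def FejerMonotone (F : Set H) (x : ℕ → H) : Prop :=
  ∀ u ∈ F, ∀ k, ‖x (k + 1) - u‖ ≤ ‖x k - u‖

namespace FejerMonotone

variable {F : Set H} {x : ℕ → H} {u : H}

theorem antitone_norm_sub (h : FejerMonotone F x) (hu : u ∈ F) :
    Antitone fun k => ‖x k - u‖ :=
  antitone_nat_of_succ_le (h u hu)

theorem exists_tendsto_norm_sub (h : FejerMonotone F x) (hu : u ∈ F) :
    ∃ L, Tendsto (fun k => ‖x k - u‖) atTop (𝓝 L) :=
  ⟨_, tendsto_atTop_ciInf (h.antitone_norm_sub hu)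
    ⟨0, Set.forall_mem_range.2 fun _ => norm_nonneg _⟩⟩

theorem norm_le (h : FejerMonotone F x) (hu : u ∈ F) (k : ℕ) : ‖x k‖ ≤ ‖x 0 - u‖ + ‖u‖ :=
  calc ‖x k‖ ≤ ‖x k - u‖ + ‖u‖ := norm_le_norm_sub_add _ _
    _ ≤ ‖x 0 - u‖ + ‖u‖ := by gcongr; exact h.antitone_norm_sub hu (Nat.zero_le k)

variable [InnerProductSpace ℝ H]

/-- Opial's argument: `⟪x k, z₂ - z₁⟫` is a combination of `‖x k - z₁‖²` and `‖x k - z₂‖²`, so it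
converges, and its limit is both `⟪z₁, z₂ - z₁⟫` and `⟪z₂, z₂ - z₁⟫`. -/
theorem eq_of_weakTendsto (h : FejerMonotone F x) {z₁ z₂ : H} (hz₁ : z₁ ∈ F) (hz₂ : z₂ ∈ F)
    {l₁ l₂ : Filter ℕ} [l₁.NeBot] [l₂.NeBot] (hl₁ : l₁ ≤ atTop) (hl₂ : l₂ ≤ atTop)
    (h₁ : WeakTendsto x l₁ z₁) (h₂ : WeakTendsto x l₂ z₂) : z₁ = z₂ := by
  obtain ⟨L₁, hL₁⟩ := h.exists_tendsto_norm_sub hz₁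
  obtain ⟨L₂, hL₂⟩ := h.exists_tendsto_norm_sub hz₂
  have hpolar : ∀ k, ⟪x k, z₂ - z₁⟫ = (‖x k - z₁‖ ^ 2 - ‖x k - z₂‖ ^ 2 - ‖z₁‖ ^ 2 + ‖z₂‖ ^ 2) / 2 :=
    fun k => by rw [inner_sub_right, norm_sub_sq_real, norm_sub_sq_real]; ring
  have hlim : Tendsto (fun k => ⟪x k, z₂ - z₁⟫) atTop
      (𝓝 ((L₁ ^ 2 - L₂ ^ 2 - ‖z₁‖ ^ 2 + ‖z₂‖ ^ 2) / 2)) := by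
    simp_rw [hpolar]
    exact ((((hL₁.pow 2).sub (hL₂.pow 2)).sub_const _).add_const _).div_const 2
  have he₁ := tendsto_nhds_unique (h₁ (z₂ - z₁)) (hlim.mono_left hl₁)
  have he₂ := tendsto_nhds_unique (h₂ (z₂ - z₁)) (hlim.mono_left hl₂)
  have hzero : ⟪z₂ - z₁, z₂ - z₁⟫ = 0 := by rw [inner_sub_left, he₁, he₂, sub_self]
  exact (sub_eq_zero.1 (inner_self_eq_zero.1 hzero)).symm

theorem exists_weakTendsto [CompleteSpace H] (h : FejerMonotone F x)
    (hne : F.Nonempty)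
    (hclust : ∀ (U : Ultrafilter ℕ) (z : H), (U : Filter ℕ) ≤ atTop → WeakTendsto x U z → z ∈ F) :
    ∃ z ∈ F, WeakTendsto x atTop z := by
  obtain ⟨u, hu⟩ := hne
  have hcluster : ∀ U : Ultrafilter ℕ, (U : Filter ℕ) ≤ atTop → ∃ z ∈ F, WeakTendsto x U z :=
    fun U hU =>
      let ⟨z, hz⟩ := exists_weakTendsto_of_norm_le (h.norm_le hu) U
      ⟨z, hclust U z hU hz, hz⟩
  obtain ⟨z, hzF, hz⟩ := hcluster (Ultrafilter.of atTop) (Ultrafilter.of_le atTop)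
  refine ⟨z, hzF, fun w => (tendsto_iff_ultrafilter _ _ _).2 fun U hU => ?_⟩
  obtain ⟨z', hz'F, hz'⟩ := hcluster U hU
  rw [h.eq_of_weakTendsto hzF hz'F (Ultrafilter.of_le atTop) hU hz hz']
  exact hz' w

theorem tendsto_of_isNearestPoint [CompleteSpace H] (h : FejerMonotone F x) (hF : Convex ℝ F)
    {p : ℕ → H} (hp : ∀ k, IsNearestPoint F (x k) (p k)) {z : H} (hzF : z ∈ F)
    (hz : WeakTendsto x atTop z) : Tendsto p atTop (𝓝 z) := by
  have hcauchy : CauchySeq p := by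
    refine cauchySeq_of_dist_sq_le_sub (e := fun k => ‖x k - p k‖ ^ 2)
      ⟨0, Set.forall_mem_range.2 fun _ => sq_nonneg _⟩ fun k m hkm => ?_
    have hxm : ‖x m - p k‖ ≤ ‖x k - p k‖ := h.antitone_norm_sub (hp k).1 hkm
    rw [dist_comm, dist_eq_norm]
    linarith [(hp m).norm_sub_sq_le hF (hp k).1, pow_le_pow_left₀ (norm_nonneg _) hxm 2]
  obtain ⟨q, hq⟩ := cauchySeq_tendsto_of_complete hcauchy
  have hbdd : IsBoundedUnder (· ≤ ·) atTop fun k => ‖x k‖ := isBoundedUnder_of ⟨_, h.norm_le hzF⟩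
  have hlim : Tendsto (fun k => ⟪x k - p k, z - p k⟫) atTop (𝓝 (‖z - q‖ ^ 2)) := by
    rw [← real_inner_self_eq_norm_sq]
    simp_rw [inner_sub_left _ _ (z - _)]
    exact (hz.tendsto_inner hbdd (tendsto_const_nhds.sub hq)).sub
      (hq.inner (tendsto_const_nhds.sub hq))
  have hle : ‖z - q‖ ^ 2 ≤ 0 := le_of_tendsto' hlim fun k => (hp k).inner_sub_nonpos hF hzF
  rwa [norm_sub_eq_zero_iff.1 ((sq_nonpos_iff _).1 hle)]

end FejerMonotone

end Fejer

section VariationalInequality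

variable {H : Type*} [NormedAddCommGroup H] [InnerProductSpace ℝ H] {C : Set H} {f : H → H}

def viSolutionSet (C : Set H) (f : H → H) : Set H :=
  {u | u ∈ C ∧ ∀ w ∈ C, 0 ≤ ⟪f u, w - u⟫}

/-- Minty's lemma: evaluate the hypothesis at `u + s • (w - u)` and let `s → 0⁺`. -/
theorem mem_viSolutionSet_of_minty (hC : Convex ℝ C) (hf : ContinuousOn f C) {u : H}
    (hu : u ∈ C) (h : ∀ w ∈ C, 0 ≤ ⟪f w, w - u⟫) : u ∈ viSolutionSet C f := by
  refine ⟨hu, fun w hw => ?_⟩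
  have hs : ∀ n : ℕ, (0 : ℝ) < 1 / (n + 1) ∧ 1 / ((n : ℝ) + 1) ≤ 1 := fun n =>
    ⟨by positivity, div_le_one_of_le₀ (by linarith [n.cast_nonneg (α := ℝ)]) (by positivity)⟩
  set q : ℕ → H := fun n => u + (1 / (n + 1) : ℝ) • (w - u)
  have hqC : ∀ n, q n ∈ C := fun n => hC.add_smul_sub_mem hu hw ⟨(hs n).1.le, (hs n).2⟩
  have hq : Tendsto q atTop (𝓝[C] u) := by
    refine tendsto_nhdsWithin_iff.2 ⟨?_, Eventually.of_forall hqC⟩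
    simpa [q] using (tendsto_const_nhds (x := u)).add
      ((tendsto_one_div_add_atTop_nhds_zero_nat (𝕜 := ℝ)).smul_const (w - u))
  have hlim : Tendsto (fun n => ⟪f (q n), w - u⟫) atTop (𝓝 ⟪f u, w - u⟫) :=
    ((hf u hu).tendsto.comp hq).inner tendsto_const_nhds
  refine ge_of_tendsto' hlim fun n => ?_
  have hqn := h (q n) (hqC n)
  rw [show q n - u = (1 / (n + 1) : ℝ) • (w - u) from add_sub_cancel_left _ _,
    real_inner_smul_right] at hqn
  exact nonneg_of_mul_nonneg_right hqn (hs n).1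

theorem viSolutionSet_eq_inter_iInter (hC : Convex ℝ C)
    (hmono : ∀ x ∈ C, ∀ y ∈ C, 0 ≤ ⟪f x - f y, x - y⟫) (hf : ContinuousOn f C) :
    viSolutionSet C f = C ∩ ⋂ w ∈ C, {u | ⟪f w, u - w⟫ ≤ 0} := by
  ext u
  simp only [Set.mem_inter_iff, Set.mem_iInter₂, Set.mem_ofPred_eq]
  have hflip : ∀ w, ⟪f w, u - w⟫ = -⟪f w, w - u⟫ := fun w => by rw [← inner_neg_right, neg_sub]
  simp_rw [hflip, neg_nonpos]
  refine ⟨fun ⟨hu, hsol⟩ => ⟨hu, fun w hw => ?_⟩,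
    fun ⟨hu, h⟩ => mem_viSolutionSet_of_minty hC hf hu h⟩
  have := hmono w hw u hu
  rw [inner_sub_left] at this
  linarith [hsol w hw]

theorem isClosed_viSolutionSet (hCcl : IsClosed C) (hC : Convex ℝ C)
    (hmono : ∀ x ∈ C, ∀ y ∈ C, 0 ≤ ⟪f x - f y, x - y⟫) (hf : ContinuousOn f C) :
    IsClosed (viSolutionSet C f) := by
  rw [viSolutionSet_eq_inter_iInter hC hmono hf]
  exact hCcl.inter (isClosed_biInter fun w _ => isClosed_setOf_inner_sub_nonpos _ _)

theorem convex_viSolutionSet (hC : Convex ℝ C)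
    (hmono : ∀ x ∈ C, ∀ y ∈ C, 0 ≤ ⟪f x - f y, x - y⟫) (hf : ContinuousOn f C) :
    Convex ℝ (viSolutionSet C f) := by
  rw [viSolutionSet_eq_inter_iInter hC hmono hf]
  exact hC.inter (convex_iInter₂ fun w _ => convex_setOf_inner_sub_nonpos _ _)

end VariationalInequality

theorem continuous_of_norm_sub_le {E F : Type*} [SeminormedAddCommGroup E]
    [SeminormedAddCommGroup F] {f : E → F} {κ : ℝ} (h : ∀ x y, ‖f x - f y‖ ≤ κ * ‖x - y‖) :
    Continuous f :=
  (LipschitzWith.of_dist_le' (K := κ) fun x y => by simpa only [dist_eq_norm] using h x y).continuous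

theorem tendsto_zero_of_add_mul_norm_sq_le {E : Type*} [SeminormedAddGroup E] {d : ℕ → ℝ}
    {v : ℕ → E} {ε : ℝ} (hε : 0 < ε) (hd : ∀ k, 0 ≤ d k)
    (h : ∀ k, d (k + 1) + ε * ‖v k‖ ^ 2 ≤ d k) : Tendsto v atTop (𝓝 0) := by
  have hanti : Antitone d := antitone_nat_of_succ_le fun k => by
    nlinarith [h k, mul_nonneg hε.le (sq_nonneg ‖v k‖)]
  have hlim := tendsto_atTop_ciInf hanti ⟨0, Set.forall_mem_range.2 hd⟩
  have hdiff : Tendsto (fun k => (d k - d (k + 1)) / ε) atTop (𝓝 0) := by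
    simpa using (hlim.sub (hlim.comp (tendsto_add_atTop_nat 1))).div_const ε
  have hsq : Tendsto (fun k => ‖v k‖ ^ 2) atTop (𝓝 0) :=
    squeeze_zero (fun k => sq_nonneg _) (fun k => by rw [le_div_iff₀ hε]; linarith [h k]) hdiff
  rw [tendsto_zero_iff_norm_tendsto_zero]
  simpa using hsq.sqrt

section Algorithm

variable {H : Type*} [NormedAddCommGroup H] [InnerProductSpace ℝ H] {C : Set H} {f : H → H}

theorem norm_sub_sq_le_of_extragradient {T : Set H} (hT : Convex ℝ T) {X Y t u : H} {τ κ : ℝ}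
    (hτ : 0 ≤ τ) (ht : IsNearestPoint T (X - τ • f Y) t) (hu : u ∈ T)
    (hYu : 0 ≤ ⟪f Y, Y - u⟫) (hY : ⟪X - τ • f X - Y, t - Y⟫ ≤ 0)
    (hLip : ‖f X - f Y‖ ≤ κ * ‖X - Y‖) :
    ‖t - u‖ ^ 2 ≤ ‖X - u‖ ^ 2 - (1 - (τ * κ) ^ 2) * ‖X - Y‖ ^ 2 := by
  have hproj : ‖t - u‖ ^ 2 ≤ ‖X - τ • f Y - u‖ ^ 2 - ‖X - τ • f Y - t‖ ^ 2 :=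
    ht.norm_sub_sq_le hT hu
  have hshift : ‖X - τ • f Y - u‖ ^ 2 - ‖X - τ • f Y - t‖ ^ 2 =
      ‖X - u‖ ^ 2 - ‖X - t‖ ^ 2 - 2 * τ * ⟪f Y, t - u⟫ := by
    have hdiff : ⟪X - u, f Y⟫ - ⟪X - t, f Y⟫ = ⟪f Y, t - u⟫ := by
      rw [← inner_sub_left, sub_sub_sub_cancel_left, real_inner_comm]
    rw [sub_right_comm X _ u, sub_right_comm X _ t, norm_sub_sq_real (X - u),
      norm_sub_sq_real (X - t), real_inner_smul_right, real_inner_smul_right]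
    linear_combination (-2 * τ) * hdiff
  have hsplit : ⟪f Y, t - u⟫ = ⟪f Y, t - Y⟫ + ⟪f Y, Y - u⟫ := by
    rw [← inner_add_right, sub_add_sub_cancel]
  have hXt : ‖X - t‖ ^ 2 = ‖X - Y‖ ^ 2 - 2 * ⟪X - Y, t - Y⟫ + ‖t - Y‖ ^ 2 := by
    rw [← norm_sub_sq_real, sub_sub_sub_cancel_right]
  have hcross : ⟪X - Y, t - Y⟫ - τ * ⟪f Y, t - Y⟫ =
      ⟪X - τ • f X - Y, t - Y⟫ + τ * ⟪f X - f Y, t - Y⟫ := by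
    simp only [inner_sub_left, real_inner_smul_left]
    ring
  have hLipT : τ * ⟪f X - f Y, t - Y⟫ ≤ τ * κ * ‖X - Y‖ * ‖t - Y‖ := by
    calc τ * ⟪f X - f Y, t - Y⟫ ≤ τ * (‖f X - f Y‖ * ‖t - Y‖) := by
          gcongr; exact real_inner_le_norm _ _
      _ ≤ τ * (κ * ‖X - Y‖ * ‖t - Y‖) := by gcongr
      _ = τ * κ * ‖X - Y‖ * ‖t - Y‖ := by ring
  nlinarith [sq_nonneg (τ * κ * ‖X - Y‖ - ‖t - Y‖), mul_nonneg hτ hYu]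

theorem norm_sub_sq_add_le_of_iterate {Ω : Set H} (hC : Convex ℝ C) (hΩ : Convex ℝ Ω)
    (hmono : ∀ x ∈ C, ∀ y ∈ C, 0 ≤ ⟪f x - f y, x - y⟫) {X Y t z u : H} {τ κ θ : ℝ}
    (hτ : 0 ≤ τ) (hθ₁ : θ ≤ 1) (hLip : ‖f X - f Y‖ ≤ κ * ‖X - Y‖)
    (hY : IsNearestPoint C (X - τ • f X) Y)
    (ht : IsNearestPoint {w | ⟪X - τ • f X - Y, w - Y⟫ ≤ 0} (X - τ • f Y) t)
    (hz : IsNearestPoint Ω t z) (hu : u ∈ Ω ∩ viSolutionSet C f) :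
    ‖θ • X + (1 - θ) • z - u‖ ^ 2 + (1 - θ) * (1 - (τ * κ) ^ 2) * ‖X - Y‖ ^ 2
      + θ * (1 - θ) * ‖X - z‖ ^ 2 ≤ ‖X - u‖ ^ 2 := by
  obtain ⟨huΩ, huC, hsol⟩ := hu
  have hYu : 0 ≤ ⟪f Y, Y - u⟫ := by
    have := hmono Y hY.1 u huC
    rw [inner_sub_left] at this
    linarith [hsol Y hY.1]
  have htu := norm_sub_sq_le_of_extragradient (convex_setOf_inner_sub_nonpos _ _) hτ ht
    (hY.inner_sub_nonpos hC huC) hYu ht.1 hLip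
  have hzu : ‖z - u‖ ^ 2 ≤ ‖t - u‖ ^ 2 := by
    linarith [hz.norm_sub_sq_le hΩ huΩ, sq_nonneg ‖t - z‖]
  rw [show θ • X + (1 - θ) • z - u = θ • (X - u) + (1 - θ) • (z - u) by module,
    norm_smul_add_one_sub_smul_sq, sub_sub_sub_cancel_right]
  nlinarith [mul_le_mul_of_nonneg_left (hzu.trans htu) (sub_nonneg.2 hθ₁)]

theorem neg_mul_le_inner_of_isNearestPoint (hC : Convex ℝ C)
    (hmono : ∀ x ∈ C, ∀ y ∈ C, 0 ≤ ⟪f x - f y, x - y⟫) {X Y w : H} {τ κ a : ℝ} (ha : 0 < a)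
    (hτ : a ≤ τ) (hY : IsNearestPoint C (X - τ • f X) Y) (hw : w ∈ C)
    (hLip : ‖f X - f Y‖ ≤ κ * ‖X - Y‖) :
    -((κ + 1 / a) * ‖X - Y‖ * ‖w - Y‖) ≤ ⟪f w, w - Y⟫ := by
  have hvi := hY.inner_sub_nonpos hC hw
  rw [sub_right_comm, inner_sub_left, real_inner_smul_left] at hvi
  have hXY : -(‖X - Y‖ * ‖w - Y‖) ≤ ⟪X - Y, w - Y⟫ :=
    neg_le_of_abs_le (abs_real_inner_le_norm _ _)
  have hfX : -(‖X - Y‖ * ‖w - Y‖ / a) ≤ ⟪f X, w - Y⟫ := by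
    calc -(‖X - Y‖ * ‖w - Y‖ / a) ≤ -(‖X - Y‖ * ‖w - Y‖) / τ := by
          rw [neg_div, neg_le_neg_iff]
          exact div_le_div_of_nonneg_left (by positivity) ha hτ
      _ ≤ ⟪f X, w - Y⟫ := by rw [div_le_iff₀ (ha.trans_le hτ)]; linarith
  have hLipw : ⟪f X - f Y, w - Y⟫ ≤ κ * ‖X - Y‖ * ‖w - Y‖ :=
    (real_inner_le_norm _ _).trans (by gcongr)
  have hmw := hmono w hw Y hY.1
  rw [inner_sub_left] at hLipw hmw
  have : (κ + 1 / a) * ‖X - Y‖ * ‖w - Y‖ = κ * ‖X - Y‖ * ‖w - Y‖ + ‖X - Y‖ * ‖w - Y‖ / a := by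
    ring
  linarith

theorem mem_viSolutionSet_of_weakTendsto [CompleteSpace H] {ι : Type*} {l : Filter ι} [l.NeBot]
    (hCcl : IsClosed C) (hC : Convex ℝ C) (hmono : ∀ x ∈ C, ∀ y ∈ C, 0 ≤ ⟪f x - f y, x - y⟫)
    (hf : ContinuousOn f C) {κ a R : ℝ} (ha : 0 < a) {τ : ι → ℝ} (hτ : ∀ k, a ≤ τ k)
    {x y : ι → H} (hLip : ∀ k, ‖f (x k) - f (y k)‖ ≤ κ * ‖x k - y k‖)
    (hy : ∀ k, IsNearestPoint C (x k - τ k • f (x k)) (y k)) (hxR : ∀ k, ‖x k‖ ≤ R)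
    (hxy : Tendsto (fun k => x k - y k) l (𝓝 0)) {p : H} (hp : WeakTendsto x l p) :
    p ∈ viSolutionSet C f := by
  have hyp := hp.of_tendsto_sub hxy
  refine mem_viSolutionSet_of_minty hC hf
    (hyp.mem_of_isClosed_of_convex hCcl hC (Eventually.of_forall fun k => (hy k).1)) fun w hw => ?_
  have hbdd : IsBoundedUnder (· ≤ ·) l fun k => ‖‖w - y k‖‖ := by
    refine isBoundedUnder_of_eventually_le (a := ‖w‖ + R + 1) ?_
    filter_upwards [hxy.norm.eventually_le_const (by norm_num : (‖(0 : H)‖) < 1)] with k hk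
    rw [norm_norm]
    calc ‖w - y k‖ ≤ ‖w‖ + ‖x k‖ + ‖x k - y k‖ := by
          rw [show w - y k = w - x k + (x k - y k) by abel]
          exact (norm_add_le _ _).trans (by gcongr; exact norm_sub_le _ _)
      _ ≤ ‖w‖ + R + 1 := by gcongr; exact hxR k
  have hlow : Tendsto (fun k => -((κ + 1 / a) * ‖x k - y k‖ * ‖w - y k‖)) l (𝓝 0) := by
    have hsmall : Tendsto (fun k => (κ + 1 / a) * ‖x k - y k‖) l (𝓝 0) := by
      simpa using hxy.norm.const_mul (κ + 1 / a)
    simpa using (hsmall.zero_mul_isBoundedUnder_le hbdd).neg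
  have hinner : Tendsto (fun k => ⟪f w, w - y k⟫) l (𝓝 ⟪f w, w - p⟫) := by
    simpa [inner_sub_right, real_inner_comm (f w)] using (hyp (f w)).const_sub ⟪f w, w⟫
  exact le_of_tendsto_of_tendsto' hlow hinner fun k =>
    neg_mul_le_inner_of_isNearestPoint hC hmono ha (hτ k) (hy k) hw (hLip k)

theorem exists_weakTendsto_of_subgradientExtragradient [CompleteSpace H] {Ω : Set H}
    (hCcl : IsClosed C) (hC : Convex ℝ C) (hΩcl : IsClosed Ω) (hΩ : Convex ℝ Ω)
    (hmono : ∀ x ∈ C, ∀ y ∈ C, 0 ≤ ⟪f x - f y, x - y⟫) {κ : ℝ} (hκ : 0 ≤ κ)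
    (hLip : ∀ x y, ‖f x - f y‖ ≤ κ * ‖x - y‖) (hne : (Ω ∩ viSolutionSet C f).Nonempty)
    {lam α : ℕ → ℝ} {a b c d : ℝ} (ha : 0 < a) (hbκ : b * κ < 1) (hlam : ∀ k, lam k ∈ Set.Icc a b)
    (hc : 0 < c) (hd : d < 1) (hα : ∀ k, α k ∈ Set.Icc c d) {x y t z p : ℕ → H}
    (hy : ∀ k, IsNearestPoint C (x k - lam k • f (x k)) (y k))
    (ht : ∀ k, IsNearestPoint {w | ⟪x k - lam k • f (x k) - y k, w - y k⟫ ≤ 0}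
      (x k - lam k • f (y k)) (t k))
    (hz : ∀ k, IsNearestPoint Ω (t k) (z k)) (hx : ∀ k, x (k + 1) = α k • x k + (1 - α k) • z k)
    (hp : ∀ k, IsNearestPoint (Ω ∩ viSolutionSet C f) (x k) (p k)) :
    ∃ q ∈ Ω ∩ viSolutionSet C f,
      WeakTendsto x atTop q ∧ WeakTendsto y atTop q ∧ Tendsto p atTop (𝓝 q) := by
  have hf : ContinuousOn f C := (continuous_of_norm_sub_le hLip).continuousOn
  have hbκ₀ : 0 ≤ b * κ := mul_nonneg (ha.le.trans ((hlam 0).1.trans (hlam 0).2)) hκ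
  set ε₁ := (1 - d) * (1 - (b * κ) ^ 2)
  set ε₂ := c * (1 - d)
  have hε₁ : 0 < ε₁ := mul_pos (sub_pos.2 hd) (by nlinarith)
  have hε₂ : 0 < ε₂ := mul_pos hc (sub_pos.2 hd)
  have hstep : ∀ u ∈ Ω ∩ viSolutionSet C f, ∀ k,
      ‖x (k + 1) - u‖ ^ 2 + ε₁ * ‖x k - y k‖ ^ 2 + ε₂ * ‖x k - z k‖ ^ 2 ≤ ‖x k - u‖ ^ 2 := by
    intro u hu k
    obtain ⟨hcα, hαd⟩ := hα k
    have hτκ : 0 ≤ lam k * κ := mul_nonneg (ha.le.trans (hlam k).1) hκ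
    refine le_trans ?_ (norm_sub_sq_add_le_of_iterate hC hΩ hmono (ha.le.trans (hlam k).1)
      (hαd.trans hd.le) (hLip _ _) (hy k) (ht k) (hz k) hu)
    rw [hx k]
    gcongr _ + ?_ * _ + ?_ * _
    · exact mul_le_mul (by linarith) (by gcongr; exact (hlam k).2) (by nlinarith) (by linarith)
    · exact mul_le_mul hcα (by linarith) (by linarith) (hc.le.trans hcα)
  have hfejer : FejerMonotone (Ω ∩ viSolutionSet C f) x := fun u hu k =>
    (pow_le_pow_iff_left₀ (norm_nonneg _) (norm_nonneg _) two_ne_zero).1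
      (by nlinarith [hstep u hu k, mul_nonneg hε₁.le (sq_nonneg ‖x k - y k‖),
        mul_nonneg hε₂.le (sq_nonneg ‖x k - z k‖)])
  obtain ⟨u₀, hu₀⟩ := hne
  have hxy : Tendsto (fun k => x k - y k) atTop (𝓝 0) :=
    tendsto_zero_of_add_mul_norm_sq_le hε₁ (fun k => sq_nonneg ‖x k - u₀‖) fun k => by
      nlinarith [hstep u₀ hu₀ k, mul_nonneg hε₂.le (sq_nonneg ‖x k - z k‖)]
  have hxz : Tendsto (fun k => x k - z k) atTop (𝓝 0) :=
    tendsto_zero_of_add_mul_norm_sq_le hε₂ (fun k => sq_nonneg ‖x k - u₀‖) fun k => by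
      nlinarith [hstep u₀ hu₀ k, mul_nonneg hε₁.le (sq_nonneg ‖x k - y k‖)]
  have hclust : ∀ (U : Ultrafilter ℕ) q, (U : Filter ℕ) ≤ atTop → WeakTendsto x U q →
      q ∈ Ω ∩ viSolutionSet C f := fun U q hU hq =>
    ⟨(hq.of_tendsto_sub (hxz.mono_left hU)).mem_of_isClosed_of_convex hΩcl hΩ
        (Eventually.of_forall fun k => (hz k).1),
      mem_viSolutionSet_of_weakTendsto hCcl hC hmono hf ha (fun k => (hlam k).1)
        (fun k => hLip _ _) hy (hfejer.norm_le hu₀) (hxy.mono_left hU) hq⟩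
  obtain ⟨q, hqF, hxq⟩ := hfejer.exists_weakTendsto ⟨u₀, hu₀⟩ hclust
  exact ⟨q, hqF, hxq, hxq.of_tendsto_sub hxy,
    hfejer.tendsto_of_isNearestPoint (hΩ.inter (convex_viSolutionSet hC hmono hf)) hp hqF hxq⟩

end Algorithm

theorem cvip_algorithm_converges_general
    {H : Type*} [NormedAddCommGroup H] [InnerProductSpace ℝ H] [CompleteSpace H]
    (C Ω : Set H)
    (hCne : C.Nonempty) (hCcl : IsClosed C) (hCco : Convex ℝ C)
    (hΩne : Ω.Nonempty) (hΩcl : IsClosed Ω) (hΩco : Convex ℝ Ω)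
    (f : H → H) (κ : ℝ) (hκ : 0 < κ)
    (hmono : ∀ x ∈ C, ∀ y ∈ C, 0 ≤ ⟪f x - f y, x - y⟫)
    (hLip : ∀ x y : H, ‖f x - f y‖ ≤ κ * ‖x - y‖)
    -- the solution set `SOL(C,f)`
    (SOL : Set H) (hSOL : SOL = {u : H | u ∈ C ∧ ∀ w ∈ C, 0 ≤ ⟪f u, w - u⟫})
    (hne : (Ω ∩ SOL).Nonempty)
    -- a metric projection operator onto nonempty closed convex subsets of `H`
    (proj : Set H → H → H)
    (hproj : ∀ S : Set H, S.Nonempty → IsClosed S → Convex ℝ S →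
      ∀ x : H, proj S x ∈ S ∧ ∀ y ∈ S, ‖x - proj S x‖ ≤ ‖x - y‖)
    -- the parameters
    (lam : ℕ → ℝ) (a b : ℝ) (ha : 0 < a) (hb : b < 1 / κ)
    (hlam : ∀ k, lam k ∈ Set.Icc a b)
    (α : ℕ → ℝ) (c d : ℝ) (hc : 0 < c) (hd : d < 1)
    (hα : ∀ k, α k ∈ Set.Icc c d)
    -- the iterates
    (x y : ℕ → H) (T : ℕ → Set H)
    (hy : ∀ k, y k = proj C (x k - lam k • f (x k)))
    (hT : ∀ k, T k = {w : H | ⟪(x k - lam k • f (x k)) - y k, w - y k⟫ ≤ 0})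
    (hx : ∀ k, x (k + 1) =
      α k • x k + (1 - α k) • proj Ω (proj (T k) (x k - lam k • f (y k)))) :
    ∃ z ∈ Ω ∩ SOL,
      (∀ w : H, Filter.Tendsto (fun k => ⟪x k, w⟫) Filter.atTop (nhds ⟪z, w⟫)) ∧
      (∀ w : H, Filter.Tendsto (fun k => ⟪y k, w⟫) Filter.atTop (nhds ⟪z, w⟫)) ∧
      Filter.Tendsto (fun k => proj (Ω ∩ SOL) (x k)) Filter.atTop (nhds z) := by
  change SOL = viSolutionSet C f at hSOL
  subst hSOL
  obtain rfl : T = fun k => {w | ⟪x k - lam k • f (x k) - y k, w - y k⟫ ≤ 0} := funext hT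
  have hnear : ∀ S : Set H, S.Nonempty → IsClosed S → Convex ℝ S →
      ∀ x, IsNearestPoint S x (proj S x) := hproj
  have hf : ContinuousOn f C := (continuous_of_norm_sub_le hLip).continuousOn
  exact exists_weakTendsto_of_subgradientExtragradient hCcl hCco hΩcl hΩco hmono hκ.le hLip hne
    ha ((lt_div_iff₀ hκ).1 hb) hlam hc hd hα (fun k => hy k ▸ hnear C hCne hCcl hCco _)
    (fun k => hnear _ ⟨y k, by simp⟩ (isClosed_setOf_inner_sub_nonpos _ _)
      (convex_setOf_inner_sub_nonpos _ _) _)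
    (fun k => hnear Ω hΩne hΩcl hΩco _) hx
    (fun k => hnear _ hne (hΩcl.inter (isClosed_viSolutionSet hCcl hCco hmono hf))
      (hΩco.inter (convex_viSolutionSet hCco hmono hf)) _)

/-- Theorem `th:cvip`: convergence of the subgradient-extragradient-type algorithm
for the Constrained Variational Inequality Problem. -/
theorem cvip_algorithm_converges
    {H : Type*} [NormedAddCommGroup H] [InnerProductSpace ℝ H] [CompleteSpace H]
    (C Ω : Set H)
    (hCne : C.Nonempty) (hCcl : IsClosed C) (hCco : Convex ℝ C)
    (hΩne : Ω.Nonempty) (hΩcl : IsClosed Ω) (hΩco : Convex ℝ Ω)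
    (f : H → H) (κ : ℝ) (hκ : 0 < κ)
    (hmono : ∀ x ∈ C, ∀ y ∈ C, 0 ≤ ⟪f x - f y, x - y⟫)
    (hLip : ∀ x y : H, ‖f x - f y‖ ≤ κ * ‖x - y‖)
    -- the solution set `SOL(C,f)`
    (SOL : Set H) (hSOL : SOL = {u : H | u ∈ C ∧ ∀ w ∈ C, 0 ≤ ⟪f u, w - u⟫})
    (hne : (Ω ∩ SOL).Nonempty)
    -- a metric projection operator onto nonempty closed convex subsets of `H`
    (proj : Set H → H → H)
    (hproj : ∀ S : Set H, S.Nonempty → IsClosed S → Convex ℝ S →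
      ∀ x : H, proj S x ∈ S ∧ ∀ y ∈ S, ‖x - proj S x‖ ≤ ‖x - y‖)
    -- the parameters
    (lam : ℕ → ℝ) (a b : ℝ) (ha : 0 < a) (hab : a ≤ b) (hb : b < 1 / κ)
    (hlam : ∀ k, lam k ∈ Set.Icc a b)
    (α : ℕ → ℝ) (c d : ℝ) (hc : 0 < c) (hcd : c ≤ d) (hd : d < 1)
    (hα : ∀ k, α k ∈ Set.Icc c d)
    -- the iterates
    (x y : ℕ → H) (T : ℕ → Set H)
    (hy : ∀ k, y k = proj C (x k - lam k • f (x k)))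
    (hT : ∀ k, T k = {w : H | ⟪(x k - lam k • f (x k)) - y k, w - y k⟫ ≤ 0})
    (hx : ∀ k, x (k + 1) =
      α k • x k + (1 - α k) • proj Ω (proj (T k) (x k - lam k • f (y k)))) :
    ∃ z ∈ Ω ∩ SOL,
      (∀ w : H, Filter.Tendsto (fun k => ⟪x k, w⟫) Filter.atTop (nhds ⟪z, w⟫)) ∧
      (∀ w : H, Filter.Tendsto (fun k => ⟪y k, w⟫) Filter.atTop (nhds ⟪z, w⟫)) ∧
      Filter.Tendsto (fun k => proj (Ω ∩ SOL) (x k)) Filter.atTop (nhds z) :=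
  cvip_algorithm_converges_general C Ω hCne hCcl hCco hΩne hΩcl hΩco f κ hκ hmono hLip SOL hSOL hne
    proj hproj lam a b ha hb hlam α c d hc hd hα x y T hy hT hx
end

section
/- Let H₁ and H₂ be real Hilbert spaces, A : H₁ → H₂ a bounded linear operator, f : H₁ → H₁ and g : H₂ → H₂ operators, and C ⊆ H₁, Q ⊆ H₂ nonempty, closed and convex subsets. In the product Hilbert space H = H₁ × H₂ set D = C × Q, V = {(x,y) ∈ H : Ax = y}, and h(x,y) = (f(x), g(y)). Then a point (x*, y*) ∈ D ∩ V satisfies ⟨h(x*,y*), (x,y) − (x*,y*)⟩ ≥ 0 for all (x,y) ∈ D if and only if x* ∈ C satisfies ⟨f(x*), x − x*⟩ ≥ 0 for all x ∈ C, y* = Ax* ∈ Q, and ⟨g(Ax*), y − Ax*⟩ ≥ 0 for all y ∈ Q. -/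
open RealInnerProductSpace

/-- Equivalence of the SVIP with the CVIP in the product space `H₁ × H₂`
(with inner product `⟪(x₁,y₁),(x₂,y₂)⟫ = ⟪x₁,x₂⟫ + ⟪y₁,y₂⟫`): a point
`(x*, y*) ∈ (C × Q) ∩ V`, where `V = {(x,y) | A x = y}`, solves the product-space
variational inequality for `h(x,y) = (f x, g y)` over `C × Q` iff `x*` solves the
VIP for `f` over `C`, `A x* ∈ Q`, and `A x*` solves the VIP for `g` over `Q`. -/
theorem svip_iff_product_cvip
    {H₁ H₂ : Type*} [NormedAddCommGroup H₁] [InnerProductSpace ℝ H₁] [CompleteSpace H₁]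
    [NormedAddCommGroup H₂] [InnerProductSpace ℝ H₂] [CompleteSpace H₂]
    (A : H₁ →L[ℝ] H₂)
    (f : H₁ → H₁) (g : H₂ → H₂)
    (C : Set H₁) (Q : Set H₂)
    (hCne : C.Nonempty) (hCcl : IsClosed C) (hCco : Convex ℝ C)
    (hQne : Q.Nonempty) (hQcl : IsClosed Q) (hQco : Convex ℝ Q)
    (xs : H₁) (ys : H₂)
    -- `(x*, y*) ∈ D ∩ V`, where `D = C × Q` and `V = {(x, y) | A x = y}`
    (hxs : xs ∈ C) (hys : ys ∈ Q) (hV : A xs = ys) :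
    (∀ x ∈ C, ∀ y ∈ Q, 0 ≤ ⟪f xs, x - xs⟫ + ⟪g ys, y - ys⟫) ↔
      ((∀ x ∈ C, 0 ≤ ⟪f xs, x - xs⟫) ∧ A xs ∈ Q ∧
        ∀ y ∈ Q, 0 ≤ ⟪g (A xs), y - A xs⟫) := by
  subst hV
  constructor
  · intro h
    refine ⟨fun x hx => ?_, hys, fun y hy => ?_⟩
    · have := h x hx (A xs) hys
      simpa using this
    · have := h xs hxs y hy
      simpa using this
  · rintro ⟨h1, -, h3⟩ x hx y hy
    exact add_nonneg (h1 x hx) (h3 y hy)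
end

section
/- Let H₁ and H₂ be real Hilbert spaces and A : H₁ → H₂ a bounded linear operator with adjoint A*. Let f : H₁ → H₁ be inverse strongly monotone with constant α₁ > 0 and g : H₂ → H₂ inverse strongly monotone with constant α₂ > 0; set α = min{α₁, α₂}. Let C ⊆ H₁ and Q ⊆ H₂ be nonempty, closed and convex, let λ ∈ [0, 2α], and define U = P_C ∘ (I − λf) and T = P_Q ∘ (I − λg). Let L = ‖A‖² (the spectral radius of A*A), let γ ∈ (0, 1/L), and assume the solution set Γ = {z ∈ SOL(C,f) : Az ∈ SOL(Q,g)} is nonempty. Then any sequence {x^k} generated by x^{k+1} = U(x^k + γ A*(T(Ax^k) − Ax^k)) from an arbitrary x⁰ ∈ H₁ is Fejér-monotone with respect to Γ, i.e., ‖x^{k+1} − z‖ ≤ ‖x^k − z‖ for every z ∈ Γ and every k ≥ 0. -/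
open RealInnerProductSpace

section Aux
variable {E : Type*} [NormedAddCommGroup E] [InnerProductSpace ℝ E]

private lemma le_of_sq_le_sq' {a b : ℝ} (ha : 0 ≤ a) (hb : 0 ≤ b) (h : a ^ 2 ≤ b ^ 2) :
    a ≤ b := by nlinarith

lemma proj_vi {D : Set E} (hco : Convex ℝ D) (P : E → E)
    (hP : ∀ x : E, P x ∈ D ∧ ∀ y ∈ D, ‖x - P x‖ ≤ ‖x - y‖) (u : E) :
    ∀ w ∈ D, ⟪u - P u, w - P u⟫ ≤ 0 := by
  have hne : Nonempty D := ⟨⟨P u, (hP u).1⟩⟩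
  have hmin : ‖u - P u‖ = ⨅ w : D, ‖u - w‖ := by
    refine le_antisymm (le_ciInf fun w => (hP u).2 w w.2) ?_
    refine ciInf_le ?_ (⟨P u, (hP u).1⟩ : D)
    refine ⟨0, ?_⟩
    rintro r ⟨w, rfl⟩
    exact norm_nonneg _
  exact (norm_eq_iInf_iff_real_inner_le_zero hco (hP u).1).mp hmin

lemma proj_eq_of_vi {D : Set E} (hco : Convex ℝ D) (P : E → E)
    (hP : ∀ x : E, P x ∈ D ∧ ∀ y ∈ D, ‖x - P x‖ ≤ ‖x - y‖) {u v : E}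
    (hv : v ∈ D) (hvi : ∀ w ∈ D, ⟪u - v, w - v⟫ ≤ 0) : P u = v := by
  have h1 : ⟪u - P u, v - P u⟫ ≤ 0 := proj_vi hco P hP u v hv
  have h2 : ⟪u - v, P u - v⟫ ≤ 0 := hvi (P u) (hP u).1
  have key : ⟪v - P u, v - P u⟫ ≤ 0 := by
    have hadd := add_nonpos h1 h2
    have e : ⟪u - P u, v - P u⟫ + ⟪u - v, P u - v⟫ = ⟪v - P u, v - P u⟫ := by
      simp only [inner_sub_left, inner_sub_right]
      rw [real_inner_comm (P u) v]
      ring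
    rw [e] at hadd
    exact hadd
  have hsq : ‖v - P u‖ ^ 2 ≤ 0 := by rwa [← real_inner_self_eq_norm_sq]
  have h0 : ‖v - P u‖ = 0 := le_antisymm (by nlinarith [norm_nonneg (v - P u)]) (norm_nonneg _)
  have := norm_eq_zero.mp h0
  symm
  exact sub_eq_zero.mp this

lemma proj_nonexp {D : Set E} (hco : Convex ℝ D) (P : E → E)
    (hP : ∀ x : E, P x ∈ D ∧ ∀ y ∈ D, ‖x - P x‖ ≤ ‖x - y‖) (a b : E) :
    ‖P a - P b‖ ≤ ‖a - b‖ := by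
  have h1 : ⟪a - P a, P b - P a⟫ ≤ 0 := proj_vi hco P hP a _ (hP b).1
  have h2 : ⟪b - P b, P a - P b⟫ ≤ 0 := proj_vi hco P hP b _ (hP a).1
  have key : ‖P a - P b‖ ^ 2 ≤ ⟪a - b, P a - P b⟫ := by
    have hadd := add_nonpos h1 h2
    have e : ⟪a - P a, P b - P a⟫ + ⟪b - P b, P a - P b⟫
        = ⟪P a - P b, P a - P b⟫ - ⟪a - b, P a - P b⟫ := by
      simp only [inner_sub_left, inner_sub_right]
      rw [real_inner_comm (P b) (P a)]
      ring
    rw [e] at hadd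
    rw [← real_inner_self_eq_norm_sq]
    linarith
  have hcs : ⟪a - b, P a - P b⟫ ≤ ‖a - b‖ * ‖P a - P b‖ := real_inner_le_norm _ _
  nlinarith [norm_nonneg (P a - P b), norm_nonneg (a - b)]

/-- `I - lam • h` is nonexpansive when `h` is ISM with constant `β` and `0 ≤ lam ≤ 2β`. -/
lemma ism_shift_nonexp {h : E → E} {β lam : ℝ}
    (hh : ∀ x y : E, β * ‖h x - h y‖ ^ 2 ≤ ⟪h x - h y, x - y⟫)
    (hl0 : 0 ≤ lam) (hl2 : lam ≤ 2 * β) (p q : E) :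
    ‖(p - lam • h p) - (q - lam • h q)‖ ≤ ‖p - q‖ := by
  have e : (p - lam • h p) - (q - lam • h q) = (p - q) - lam • (h p - h q) := by
    rw [smul_sub]; abel
  have hexp : ‖(p - lam • h p) - (q - lam • h q)‖ ^ 2
      = ‖p - q‖ ^ 2 - 2 * lam * ⟪h p - h q, p - q⟫ + lam ^ 2 * ‖h p - h q‖ ^ 2 := by
    rw [e, norm_sub_sq_real, real_inner_smul_right, norm_smul, Real.norm_eq_abs,
      mul_pow, sq_abs, real_inner_comm]
    ring
  have hism := hh p q
  have hsq : ‖(p - lam • h p) - (q - lam • h q)‖ ^ 2 ≤ ‖p - q‖ ^ 2 := by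
    rw [hexp]
    nlinarith [mul_nonneg hl0 (sub_nonneg.mpr hism),
      mul_nonneg (mul_nonneg hl0 (by linarith : (0:ℝ) ≤ 2 * β - lam))
        (sq_nonneg ‖h p - h q‖)]
  exact le_of_sq_le_sq' (norm_nonneg _) (norm_nonneg _) hsq

end Aux

/-- Lemma `lemma:Fejer`: the sequence generated by Algorithm `Alg-SVIP`,
`x^{k+1} = U(x^k + γ A*(T - I)(A x^k))` with `U = P_C(I - λ f)`, `T = P_Q(I - λ g)`,
is Fejér-monotone with respect to the solution set `Γ` of the SVIP. -/
theorem svip_algorithm_fejer_monotone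
    {H₁ H₂ : Type*} [NormedAddCommGroup H₁] [InnerProductSpace ℝ H₁] [CompleteSpace H₁]
    [NormedAddCommGroup H₂] [InnerProductSpace ℝ H₂] [CompleteSpace H₂]
    (A : H₁ →L[ℝ] H₂)
    (f : H₁ → H₁) (g : H₂ → H₂) (α₁ α₂ α : ℝ) (hα₁ : 0 < α₁) (hα₂ : 0 < α₂)
    (hf : ∀ x y : H₁, α₁ * ‖f x - f y‖ ^ 2 ≤ ⟪f x - f y, x - y⟫)
    (hg : ∀ x y : H₂, α₂ * ‖g x - g y‖ ^ 2 ≤ ⟪g x - g y, x - y⟫)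
    (hα : α = min α₁ α₂)
    (C : Set H₁) (Q : Set H₂)
    (hCne : C.Nonempty) (hCcl : IsClosed C) (hCco : Convex ℝ C)
    (hQne : Q.Nonempty) (hQcl : IsClosed Q) (hQco : Convex ℝ Q)
    (lam : ℝ) (hlam : lam ∈ Set.Icc 0 (2 * α))
    -- the metric projections onto `C` and `Q`
    (PC : H₁ → H₁) (hPC : ∀ x : H₁, PC x ∈ C ∧ ∀ y ∈ C, ‖x - PC x‖ ≤ ‖x - y‖)
    (PQ : H₂ → H₂) (hPQ : ∀ x : H₂, PQ x ∈ Q ∧ ∀ y ∈ Q, ‖x - PQ x‖ ≤ ‖x - y‖)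
    (U : H₁ → H₁) (hU : ∀ x, U x = PC (x - lam • f x))
    (T : H₂ → H₂) (hT : ∀ y, T y = PQ (y - lam • g y))
    (L γ : ℝ) (hL : L = ‖A‖ ^ 2) (hγ : γ ∈ Set.Ioo 0 (1 / L))
    -- the solution set `Γ = {z ∈ SOL(C,f) | A z ∈ SOL(Q,g)}`
    (Γ : Set H₁)
    (hΓ : Γ = {z : H₁ | (z ∈ C ∧ ∀ w ∈ C, 0 ≤ ⟪f z, w - z⟫) ∧
      (A z ∈ Q ∧ ∀ w ∈ Q, 0 ≤ ⟪g (A z), w - A z⟫)})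
    (hΓne : Γ.Nonempty)
    (x : ℕ → H₁)
    (hx : ∀ k, x (k + 1) =
      U (x k + γ • (ContinuousLinearMap.adjoint A) (T (A (x k)) - A (x k)))) :
    ∀ z ∈ Γ, ∀ k : ℕ, ‖x (k + 1) - z‖ ≤ ‖x k - z‖ := by
  intro z hz k
  rw [hΓ] at hz
  obtain ⟨⟨hzC, hzf⟩, hAzQ, hzg⟩ := hz
  obtain ⟨hlam0, hlam2α⟩ := hlam
  have hlam1 : lam ≤ 2 * α₁ := by
    have := min_le_left α₁ α₂; rw [hα] at hlam2α; linarith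
  have hlam2 : lam ≤ 2 * α₂ := by
    have := min_le_right α₁ α₂; rw [hα] at hlam2α; linarith
  -- fixed points
  have hUz : U z = z := by
    rw [hU]
    refine proj_eq_of_vi hCco PC hPC hzC (fun w hw => ?_)
    have e : (z - lam • f z) - z = -(lam • f z) := by abel
    rw [e, inner_neg_left, real_inner_smul_left]
    exact neg_nonpos.mpr (mul_nonneg hlam0 (hzf w hw))
  have hTAz : T (A z) = A z := by
    rw [hT]
    refine proj_eq_of_vi hQco PQ hPQ hAzQ (fun w hw => ?_)
    have e : (A z - lam • g (A z)) - A z = -(lam • g (A z)) := by abel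
    rw [e, inner_neg_left, real_inner_smul_left]
    exact neg_nonpos.mpr (mul_nonneg hlam0 (hzg w hw))
  -- nonexpansiveness
  have hUne : ∀ p q : H₁, ‖U p - U q‖ ≤ ‖p - q‖ := fun p q => by
    rw [hU p, hU q]
    exact (proj_nonexp hCco PC hPC _ _).trans (ism_shift_nonexp hf hlam0 hlam1 p q)
  have hTne : ∀ p q : H₂, ‖T p - T q‖ ≤ ‖p - q‖ := fun p q => by
    rw [hT p, hT q]
    exact (proj_nonexp hQco PQ hPQ _ _).trans (ism_shift_nonexp hg hlam0 hlam2 p q)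
  -- notation
  set a := x k with ha
  set e : H₂ := T (A a) - A a with he
  set Aa : H₁ := (ContinuousLinearMap.adjoint A) e with hAa
  set y : H₁ := a + γ • Aa with hy
  have hstep : x (k + 1) = U y := hx k
  have h1 : ‖x (k + 1) - z‖ ≤ ‖y - z‖ := by
    rw [hstep]
    calc ‖U y - z‖ = ‖U y - U z‖ := by rw [hUz]
      _ ≤ ‖y - z‖ := hUne y z
  -- key inner product estimate
  have hinner : ⟪Aa, a - z⟫ = ⟪e, A a - A z⟫ := by
    rw [hAa, ContinuousLinearMap.adjoint_inner_left, map_sub]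
  have hkey : ⟪e, A a - A z⟫ ≤ -(1 / 2) * ‖e‖ ^ 2 := by
    have hT' : ‖T (A a) - A z‖ ≤ ‖A a - A z‖ := by
      calc ‖T (A a) - A z‖ = ‖T (A a) - T (A z)‖ := by rw [hTAz]
        _ ≤ ‖A a - A z‖ := hTne _ _
    have e1 : T (A a) - A z = e + (A a - A z) := by rw [he]; abel
    have hexp : ‖T (A a) - A z‖ ^ 2 = ‖e‖ ^ 2 + 2 * ⟪e, A a - A z⟫ + ‖A a - A z‖ ^ 2 := by
      rw [e1, norm_add_sq_real]
    nlinarith [norm_nonneg (T (A a) - A z), norm_nonneg (A a - A z)]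
  -- norm of the adjoint term
  have hAnorm : ‖Aa‖ ≤ ‖A‖ * ‖e‖ := by
    calc ‖Aa‖ ≤ ‖ContinuousLinearMap.adjoint A‖ * ‖e‖ :=
          (ContinuousLinearMap.adjoint A).le_opNorm e
      _ = ‖A‖ * ‖e‖ := by
          rw [LinearIsometryEquiv.norm_map ContinuousLinearMap.adjoint A]
  have hA2 : ‖Aa‖ ^ 2 ≤ L * ‖e‖ ^ 2 := by
    rw [hL]
    nlinarith [norm_nonneg Aa, norm_nonneg e, norm_nonneg A]
  -- positivity of L and γL < 1
  have hγ0 : 0 < γ := hγ.1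
  have hLnn : 0 ≤ L := hL ▸ sq_nonneg _
  have hL0 : 0 < L := by
    rcases hLnn.eq_or_lt with h | h
    · exfalso
      have := hγ.2
      rw [← h, div_zero] at this
      linarith
    · exact h
  have hγL : γ * L < 1 := by
    have := hγ.2
    rw [lt_div_iff₀ hL0] at this
    linarith
  -- expansion of ‖y - z‖²
  have hey : y - z = (a - z) + γ • Aa := by rw [hy]; abel
  have hexp : ‖y - z‖ ^ 2 = ‖a - z‖ ^ 2 + 2 * γ * ⟪Aa, a - z⟫ + γ ^ 2 * ‖Aa‖ ^ 2 := by
    rw [hey, norm_add_sq_real, real_inner_smul_right, norm_smul, Real.norm_eq_abs,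
      mul_pow, sq_abs, real_inner_comm]
    ring
  have h2 : ‖y - z‖ ^ 2 ≤ ‖a - z‖ ^ 2 := by
    rw [hexp, hinner]
    nlinarith [mul_le_mul_of_nonneg_left hkey (by linarith : (0:ℝ) ≤ 2 * γ),
      mul_le_mul_of_nonneg_left hA2 (sq_nonneg γ),
      mul_nonneg (mul_nonneg hγ0.le (sub_nonneg.mpr hγL.le)) (sq_nonneg ‖e‖)]
  exact h1.trans (le_of_sq_le_sq' (norm_nonneg _) (norm_nonneg _) h2)
end

section
/- Let H₁ and H₂ be real Hilbert spaces and A : H₁ → H₂ a bounded linear operator with adjoint A*; set L = ‖A‖². Let U : H₁ → H₁ be nonexpansive, T : H₂ → H₂ be nonexpansive, let z ∈ H₁ satisfy U(z) = z and T(Az) = Az, and let γ ≥ 0. Then for every x ∈ H₁, ‖U(x + γ A*(T(Ax) − Ax)) − z‖² ≤ ‖x − z‖² + γ(Lγ − 1)‖T(Ax) − Ax‖². -/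
open RealInnerProductSpace

/-- Inequality (P3): for nonexpansive `U`, `T` with `U z = z` and `T (A z) = A z`,
`‖U(x + γ A*(T(Ax) - Ax)) - z‖² ≤ ‖x - z‖² + γ(Lγ - 1)‖T(Ax) - Ax‖²` where `L = ‖A‖²`. -/
theorem svip_step_estimate
    {H₁ H₂ : Type*} [NormedAddCommGroup H₁] [InnerProductSpace ℝ H₁] [CompleteSpace H₁]
    [NormedAddCommGroup H₂] [InnerProductSpace ℝ H₂] [CompleteSpace H₂]
    (A : H₁ →L[ℝ] H₂) (L : ℝ) (hL : L = ‖A‖ ^ 2)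
    (U : H₁ → H₁) (T : H₂ → H₂)
    (hU : ∀ x y : H₁, ‖U x - U y‖ ≤ ‖x - y‖)
    (hT : ∀ x y : H₂, ‖T x - T y‖ ≤ ‖x - y‖)
    (z : H₁) (hz : U z = z) (hAz : T (A z) = A z)
    (γ : ℝ) (hγ : 0 ≤ γ) :
    ∀ x : H₁,
      ‖U (x + γ • (ContinuousLinearMap.adjoint A) (T (A x) - A x)) - z‖ ^ 2 ≤
        ‖x - z‖ ^ 2 + γ * (L * γ - 1) * ‖T (A x) - A x‖ ^ 2 := by
  intro x
  set e := T (A x) - A x with he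
  set y := x + γ • (ContinuousLinearMap.adjoint A) e with hy
  -- Step 1: nonexpansiveness of U
  have h1 : ‖U y - z‖ ≤ ‖y - z‖ := by
    calc ‖U y - z‖ = ‖U y - U z‖ := by rw [hz]
    _ ≤ ‖y - z‖ := hU y z
  have h1' : ‖U y - z‖ ^ 2 ≤ ‖y - z‖ ^ 2 :=
    pow_le_pow_left₀ (norm_nonneg _) h1 2
  -- Step 2: expand ‖y - z‖²
  have hyz : y - z = (x - z) + γ • (ContinuousLinearMap.adjoint A) e := by
    rw [hy]; abel
  have h2 : ‖y - z‖ ^ 2 = ‖x - z‖ ^ 2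
      + 2 * (γ * ⟪A x - A z, e⟫) + γ ^ 2 * ‖(ContinuousLinearMap.adjoint A) e‖ ^ 2 := by
    rw [hyz, @norm_add_sq_real]
    rw [real_inner_smul_right, ContinuousLinearMap.adjoint_inner_right]
    rw [norm_smul, mul_pow]
    simp [Real.norm_eq_abs, sq_abs, map_sub]
  -- Step 3: ⟪Ax - Az, e⟫ ≤ -½ ‖e‖²
  have h3 : ⟪A x - A z, e⟫ ≤ -(1/2) * ‖e‖ ^ 2 := by
    have hTT := hT (A x) (A z)
    rw [hAz] at hTT
    have hsq : ‖T (A x) - A z‖ ^ 2 ≤ ‖A x - A z‖ ^ 2 :=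
      pow_le_pow_left₀ (norm_nonneg _) hTT 2
    have hdec : T (A x) - A z = (A x - A z) + e := by rw [he]; abel
    rw [hdec, @norm_add_sq_real] at hsq
    nlinarith [sq_nonneg ‖e‖]
  -- Step 4: ‖A† e‖ ≤ ‖A‖ ‖e‖
  have h4 : ‖(ContinuousLinearMap.adjoint A) e‖ ^ 2 ≤ L * ‖e‖ ^ 2 := by
    have := (ContinuousLinearMap.adjoint A).le_opNorm e
    have hn : ‖ContinuousLinearMap.adjoint A‖ = ‖A‖ :=
      ContinuousLinearMap.adjoint.norm_map A
    rw [hn] at this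
    nlinarith [norm_nonneg ((ContinuousLinearMap.adjoint A) e), norm_nonneg e, norm_nonneg A]
  nlinarith [sq_nonneg γ, sq_nonneg ‖e‖, mul_le_mul_of_nonneg_left h4 (sq_nonneg γ)]
end
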